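/- arXiv:2105.04592 — 2 statements merged into one kernel-verified Lean document; each statement's English description precedes it below -/
import Mathlib

section
/- Let (D, S) be a summation on R to E, let X ∈ R[[σ]] and x ∈ E. Suppose there exist a polynomial F ∈ R[σ] with S(F) regular in E and a series A ∈ R[[σ]] such that A = F·X and A telescopes over S to the value S(F)·x. Then X telescopes over S to x. (Idempotence of the telescopic extension: T∘T = T.) -/
/-- A summation on a commutative ring `R` to a commutative `R`-algebra `E`:
an `R`-submodule `D` of `R[[σ]]` containing all polynomials, together with a map
`S` (whose values are only meaningful on `D`) which is `R`-linear on `D`,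
sums `1` to `1`, and is invariant under multiplication by `1 - σ`. -/
structure Summation (R E : Type*) [CommRing R] [CommRing E] [Algebra R E] where
  D : Submodule R (PowerSeries R)
  S : PowerSeries R → E
  S_add : ∀ X ∈ D, ∀ Y ∈ D, S (X + Y) = S X + S Y
  S_smul : ∀ (r : R), ∀ X ∈ D, S (r • X) = r • S X
  poly_mem : ∀ F : Polynomial R, (F : PowerSeries R) ∈ D
  S_one : S 1 = 1
  shift_mem : ∀ X ∈ D, (1 - PowerSeries.X) * X ∈ D
  S_shift : ∀ X ∈ D, S ((1 - PowerSeries.X) * X) = 0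

/-- `X` telescopes over the summation `𝒮` to the value `x`. -/
def Telescopes {R E : Type*} [CommRing R] [CommRing E] [Algebra R E]
    (𝒮 : Summation R E) (X : PowerSeries R) (x : E) : Prop :=
  ∃ (F : Polynomial R) (A : PowerSeries R), A ∈ 𝒮.D ∧
    A = (F : PowerSeries R) * X ∧
    𝒮.S (F : PowerSeries R) ∈ nonZeroDivisors E ∧
    𝒮.S A = 𝒮.S (F : PowerSeries R) * x

section Aux

variable {R E : Type*} [CommRing R] [CommRing E] [Algebra R E]

lemma Summation.S_sub (𝒮 : Summation R E) {X Y : PowerSeries R}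
    (hX : X ∈ 𝒮.D) (hY : Y ∈ 𝒮.D) : 𝒮.S (X - Y) = 𝒮.S X - 𝒮.S Y := by
  have h : X - Y = X + (-1 : R) • Y := by
    rw [neg_one_smul]; ring
  rw [h, 𝒮.S_add X hX _ (𝒮.D.smul_mem _ hY), 𝒮.S_smul _ Y hY, neg_one_smul]
  ring

lemma Summation.sigma_mul_mem (𝒮 : Summation R E) {X : PowerSeries R}
    (hX : X ∈ 𝒮.D) : PowerSeries.X * X ∈ 𝒮.D := by
  have h : PowerSeries.X * X = X - (1 - PowerSeries.X) * X := by ring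
  rw [h]
  exact 𝒮.D.sub_mem hX (𝒮.shift_mem X hX)

lemma Summation.S_sigma_mul (𝒮 : Summation R E) {X : PowerSeries R}
    (hX : X ∈ 𝒮.D) : 𝒮.S (PowerSeries.X * X) = 𝒮.S X := by
  have h : PowerSeries.X * X = X - (1 - PowerSeries.X) * X := by ring
  rw [h, 𝒮.S_sub hX (𝒮.shift_mem X hX), 𝒮.S_shift X hX, sub_zero]

lemma Summation.S_sigma_pow (𝒮 : Summation R E) (n : ℕ) :
    𝒮.S (PowerSeries.X ^ n) = 1 := by
  induction n with
  | zero => simpa using 𝒮.S_one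
  | succ n ih =>
    have hmem : (PowerSeries.X : PowerSeries R) ^ n ∈ 𝒮.D := by
      have := 𝒮.poly_mem (Polynomial.X ^ n)
      simpa using this
    rw [pow_succ, mul_comm, 𝒮.S_sigma_mul hmem, ih]

lemma Summation.S_poly (𝒮 : Summation R E) (F : Polynomial R) :
    𝒮.S (F : PowerSeries R) = algebraMap R E (F.eval 1) := by
  induction F using Polynomial.induction_on' with
  | add p q hp hq =>
    rw [Polynomial.coe_add, 𝒮.S_add _ (𝒮.poly_mem p) _ (𝒮.poly_mem q), hp, hq,
      Polynomial.eval_add, map_add]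
  | monomial n a =>
    have hcast : ((Polynomial.monomial n a : Polynomial R) : PowerSeries R)
        = a • (PowerSeries.X ^ n : PowerSeries R) := by
      rw [← Polynomial.C_mul_X_pow_eq_monomial]
      push_cast
      rw [PowerSeries.smul_eq_C_mul]
    have hmem : (PowerSeries.X : PowerSeries R) ^ n ∈ 𝒮.D := by
      have := 𝒮.poly_mem (Polynomial.X ^ n)
      simpa using this
    rw [hcast, 𝒮.S_smul a _ hmem, 𝒮.S_sigma_pow, Polynomial.eval_monomial,
      one_pow, mul_one, Algebra.algebraMap_eq_smul_one]

lemma Summation.S_poly_mul (𝒮 : Summation R E) (F G : Polynomial R) :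
    𝒮.S ((F * G : Polynomial R) : PowerSeries R)
      = 𝒮.S (F : PowerSeries R) * 𝒮.S (G : PowerSeries R) := by
  rw [𝒮.S_poly, 𝒮.S_poly, 𝒮.S_poly, Polynomial.eval_mul, map_mul]

end Aux

theorem telescopic_idempotent {R E : Type*} [CommRing R] [CommRing E] [Algebra R E]
    [Nontrivial R] [Nontrivial E]
    (𝒮 : Summation R E) (X : PowerSeries R) (x : E)
    (F : Polynomial R) (hF : 𝒮.S (F : PowerSeries R) ∈ nonZeroDivisors E)
    (A : PowerSeries R) (hA : A = (F : PowerSeries R) * X)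
    (hAtel : Telescopes 𝒮 A (𝒮.S (F : PowerSeries R) * x)) :
    Telescopes 𝒮 X x := by
  obtain ⟨G, B, hB, hBeq, hG, hSB⟩ := hAtel
  refine ⟨G * F, B, hB, ?_, ?_, ?_⟩
  · rw [hBeq, hA, Polynomial.coe_mul, mul_assoc]
  · rw [𝒮.S_poly_mul]
    exact mul_mem hG hF
  · rw [hSB, 𝒮.S_poly_mul, mul_assoc]
end

section
/- For every integer k ≥ 1, the power series Z_k = Σₙ (−1)ⁿ · binom(n+k, k) · σⁿ ∈ ℂ[[σ]] can be written as a product of 2k+2 convergent power series, but there do NOT exist ℓ ∈ ℕ and convergent power series X_{i,j} ∈ ℂ[[σ]] (1 ≤ i ≤ ℓ, 1 ≤ j ≤ k) with Z_k = Σ_{i=1}^{ℓ} Π_{j=1}^{k} X_{i,j}. (The multiplicative grading of the classical summation does not stabilize.) -/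
/-!
`Z_k` is the binomial series `(1 + σ)^(-(k+1)) = ((1 + σ)^(-1/2))^(2k+2)`, and `(1 + σ)^(-1/2)`
converges at `σ = 1` by the alternating series test: the absolute values of its coefficients
decrease, and their squares are at most `1/(n+1)`.

Conversely, the coefficients of a convergent series tend to `0`, so they are bounded; hence a
product of `k` convergent series has coefficients `O(n^(k-1))`, and so has any finite sum of such
products. But `binom(n+k, k) ≥ (n+1)^k / k!`.
-/

/-- A formal power series over `ℂ` is convergent if its sequence of partial sums
converges. -/
def Convergent (X : PowerSeries ℂ) : Prop :=
  ∃ l : ℂ, Filter.Tendsto (fun N : ℕ => ∑ n ∈ Finset.range N, PowerSeries.coeff n X)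
    Filter.atTop (nhds l)

open Filter Finset PowerSeries Topology

namespace Ring

variable {R : Type*} [CommRing R] [BinomialRing R]

theorem succ_mul_choose_succ (r : R) (n : ℕ) :
    (n + 1 : R) * choose r (n + 1) = choose r n * (r - n) := by
  have h := choose_smul_choose r (Nat.le_add_right n 1)
  rwa [Nat.choose_succ_self_right, Nat.add_sub_cancel_left, choose_one_right, nsmul_eq_mul,
    Nat.cast_succ] at h

theorem choose_neg_natCast_succ (k n : ℕ) :
    choose (-(k + 1 : R)) n = (-1) ^ n * ((n + k).choose k : R) := by
  rw [choose_neg, add_right_comm, add_sub_cancel_right, ← Nat.cast_add, choose_natCast,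
    Units.smul_def, Int.coe_negOnePow_natCast, add_comm k, ← Nat.choose_symm_add, zsmul_eq_mul]
  push_cast
  ring

end Ring

theorem PowerSeries.binomialSeries_nsmul {R A : Type*} [CommRing R] [BinomialRing R] [Ring A]
    [Algebra R A] (m : ℕ) (r : R) :
    binomialSeries A (m • r) = binomialSeries A r ^ m := by
  induction m with
  | zero => simp
  | succ m ih => rw [succ_nsmul, binomialSeries_add, ih, pow_succ]

theorem PowerSeries.binomialSeries_neg_natCast_succ {R : Type*} [CommRing R] [BinomialRing R]
    (k : ℕ) :
    binomialSeries R (-(k + 1 : R)) = mk fun n => (-1) ^ n * ((n + k).choose k : R) := by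
  ext n
  rw [binomialSeries_coeff, coeff_mk, smul_eq_mul, mul_one, Ring.choose_neg_natCast_succ]

noncomputable def absChooseNegHalf (n : ℕ) : ℝ := (-1) ^ n * Ring.choose (-1 / 2 : ℝ) n

theorem absChooseNegHalf_succ (n : ℕ) :
    absChooseNegHalf (n + 1) = absChooseNegHalf n * ((2 * n + 1) / (2 * n + 2)) := by
  have h : Ring.choose (-1 / 2 : ℝ) (n + 1) =
      Ring.choose (-1 / 2 : ℝ) n * (-1 / 2 - n) / (n + 1) := by
    rw [eq_div_iff (by positivity), mul_comm]
    exact Ring.succ_mul_choose_succ _ n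
  rw [absChooseNegHalf, absChooseNegHalf, pow_succ, h]
  field_simp
  ring

theorem absChooseNegHalf_nonneg (n : ℕ) : 0 ≤ absChooseNegHalf n := by
  induction n with
  | zero => simp [absChooseNegHalf]
  | succ n ih => rw [absChooseNegHalf_succ]; positivity

theorem antitone_absChooseNegHalf : Antitone absChooseNegHalf := by
  refine antitone_nat_of_succ_le fun n => ?_
  rw [absChooseNegHalf_succ]
  refine mul_le_of_le_one_right (absChooseNegHalf_nonneg n) ?_
  rw [div_le_one (by positivity)]
  linarith

theorem absChooseNegHalf_sq_mul_le (n : ℕ) : absChooseNegHalf n ^ 2 * (n + 1) ≤ 1 := by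
  induction n with
  | zero => simp [absChooseNegHalf]
  | succ n ih =>
    have key : ((2 * n + 1) / (2 * n + 2) : ℝ) ^ 2 * (n + 1 + 1) ≤ n + 1 := by
      rw [div_pow, div_mul_eq_mul_div, div_le_iff₀ (by positivity)]
      nlinarith
    calc absChooseNegHalf (n + 1) ^ 2 * ((n + 1 : ℕ) + 1)
        = absChooseNegHalf n ^ 2 * (((2 * n + 1) / (2 * n + 2) : ℝ) ^ 2 * (n + 1 + 1)) := by
          rw [absChooseNegHalf_succ]; push_cast; ring
      _ ≤ absChooseNegHalf n ^ 2 * (n + 1) := by gcongr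
      _ ≤ 1 := ih

theorem tendsto_absChooseNegHalf : Tendsto absChooseNegHalf atTop (𝓝 0) := by
  have hsq : Tendsto (fun n => absChooseNegHalf n ^ 2) atTop (𝓝 0) := by
    refine squeeze_zero (fun n => sq_nonneg _) (fun n => ?_)
      tendsto_one_div_add_atTop_nhds_zero_nat
    rw [le_div_iff₀ (by positivity)]
    exact absChooseNegHalf_sq_mul_le n
  simpa [Real.sqrt_sq (absChooseNegHalf_nonneg _)] using hsq.sqrt

theorem convergent_binomialSeries_neg_half :
    Convergent (binomialSeries ℂ (-1 / 2 : ℂ)) := by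
  obtain ⟨l, hl⟩ :=
    antitone_absChooseNegHalf.tendsto_alternating_series_of_tendsto_zero tendsto_absChooseNegHalf
  refine ⟨l, ?_⟩
  have hcoeff (n : ℕ) : coeff n (binomialSeries ℂ (-1 / 2 : ℂ)) =
      ((-1) ^ n * absChooseNegHalf n : ℝ) := by
    rw [absChooseNegHalf, ← mul_assoc, ← pow_add, Even.neg_one_pow ⟨n, rfl⟩, one_mul,
      Complex.ofReal_choose, binomialSeries_coeff, smul_eq_mul, mul_one]
    push_cast
    rfl
  simp_rw [hcoeff, ← Complex.ofReal_sum]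
  exact (Complex.continuous_ofReal.tendsto l).comp hl

theorem Convergent.exists_norm_coeff_le {X : PowerSeries ℂ} (hX : Convergent X) :
    ∃ M : ℝ, ∀ n, ‖coeff n X‖ ≤ M := by
  obtain ⟨l, hl⟩ := hX
  have hcoeff : Tendsto (fun n => coeff n X) atTop (𝓝 0) := by
    simpa [sum_range_succ] using (hl.comp (tendsto_add_atTop_nat 1)).sub hl
  obtain ⟨M, hM⟩ := hcoeff.norm.bddAbove_range
  exact ⟨M, fun n => hM (Set.mem_range_self n)⟩

section PolynomialGrowth

variable {R : Type*} [NormedCommRing R]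

theorem PowerSeries.norm_coeff_mul_le {f g : R⟦X⟧} {A B : ℝ} {a b : ℕ}
    (hf : ∀ n, ‖coeff n f‖ ≤ A * (n + 1) ^ a) (hg : ∀ n, ‖coeff n g‖ ≤ B * (n + 1) ^ b)
    (n : ℕ) : ‖coeff n (f * g)‖ ≤ A * B * (n + 1) ^ (a + b + 1) := by
  have hA : 0 ≤ A := by simpa using (norm_nonneg _).trans (hf 0)
  have hB : 0 ≤ B := by simpa using (norm_nonneg _).trans (hg 0)
  have hterm : ∀ p ∈ antidiagonal n,
      ‖coeff p.1 f * coeff p.2 g‖ ≤ A * B * ((n : ℝ) + 1) ^ (a + b) := by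
    intro p hp
    have hp : p.1 + p.2 = n := mem_antidiagonal.mp hp
    calc ‖coeff p.1 f * coeff p.2 g‖ ≤ ‖coeff p.1 f‖ * ‖coeff p.2 g‖ := norm_mul_le _ _
      _ ≤ (A * (p.1 + 1) ^ a) * (B * (p.2 + 1) ^ b) :=
        mul_le_mul (hf _) (hg _) (norm_nonneg _) (by positivity)
      _ ≤ (A * (n + 1) ^ a) * (B * (n + 1) ^ b) := by gcongr <;> omega
      _ = A * B * ((n : ℝ) + 1) ^ (a + b) := by ring
  calc ‖coeff n (f * g)‖ ≤ ∑ p ∈ antidiagonal n, ‖coeff p.1 f * coeff p.2 g‖ := by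
        rw [coeff_mul]; exact norm_sum_le _ _
    _ ≤ ∑ _p ∈ antidiagonal n, A * B * ((n : ℝ) + 1) ^ (a + b) := sum_le_sum hterm
    _ = A * B * (n + 1) ^ (a + b + 1) := by
        rw [sum_const, Nat.card_antidiagonal, nsmul_eq_mul]; push_cast; ring

theorem PowerSeries.norm_coeff_prod_le {m : ℕ} {f : Fin (m + 1) → R⟦X⟧} {M : Fin (m + 1) → ℝ}
    (hf : ∀ j n, ‖coeff n (f j)‖ ≤ M j) (n : ℕ) :
    ‖coeff n (∏ j, f j)‖ ≤ (∏ j, M j) * (n + 1) ^ m := by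
  induction m generalizing n with
  | zero => simpa using hf 0 n
  | succ m ih =>
    have h := norm_coeff_mul_le (a := 0) (by simpa using hf 0) (ih fun j => hf j.succ) n
    rwa [zero_add, ← Fin.prod_univ_succ, ← Fin.prod_univ_succ] at h

end PolynomialGrowth

theorem exists_mul_pow_lt_choose (m : ℕ) (C : ℝ) :
    ∃ n : ℕ, C * ((n : ℝ) + 1) ^ m < ((n + (m + 1)).choose (m + 1) : ℝ) := by
  obtain ⟨n, hn⟩ := exists_nat_gt (C * (m + 1).factorial)
  refine ⟨n, ?_⟩
  have hlow := Nat.pow_le_choose (α := ℝ) (m + 1) (n + (m + 1))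
  rw [show n + (m + 1) + 1 - (m + 1) = n + 1 by omega] at hlow
  refine lt_of_lt_of_le ?_ hlow
  rw [lt_div_iff₀ (by positivity)]
  push_cast
  calc C * ((n : ℝ) + 1) ^ m * (m + 1).factorial = (C * (m + 1).factorial) * (n + 1) ^ m := by
        ring
    _ < (n + 1) * (n + 1) ^ m := by gcongr; linarith
    _ = (n + 1) ^ (m + 1) := by ring

theorem grading_does_not_stabilize (k : ℕ) (hk : 1 ≤ k) :
    (∃ Y : Fin (2 * k + 2) → PowerSeries ℂ, (∀ j, Convergent (Y j)) ∧
      PowerSeries.mk (fun n : ℕ => (-1 : ℂ) ^ n * ((n + k).choose k : ℂ)) =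
        ∏ j : Fin (2 * k + 2), Y j) ∧
    ¬ (∃ (ℓ : ℕ) (X : Fin ℓ → Fin k → PowerSeries ℂ), (∀ i j, Convergent (X i j)) ∧
      PowerSeries.mk (fun n : ℕ => (-1 : ℂ) ^ n * ((n + k).choose k : ℂ)) =
        ∑ i : Fin ℓ, ∏ j : Fin k, X i j) := by
  refine ⟨⟨fun _ => binomialSeries ℂ (-1 / 2 : ℂ), fun _ => convergent_binomialSeries_neg_half,
    ?_⟩, ?_⟩
  · rw [prod_const, card_univ, Fintype.card_fin, ← binomialSeries_nsmul,
      show (2 * k + 2) • (-1 / 2 : ℂ) = -(k + 1) by push_cast [nsmul_eq_mul]; ring,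
      binomialSeries_neg_natCast_succ]
  · rintro ⟨ℓ, X, hX, hZ⟩
    obtain ⟨m, rfl⟩ : ∃ m, k = m + 1 := ⟨k - 1, by omega⟩
    choose M hM using fun i j => (hX i j).exists_norm_coeff_le
    obtain ⟨n, hn⟩ := exists_mul_pow_lt_choose m (∑ i, ∏ j, M i j)
    refine hn.not_ge ?_
    calc ((n + (m + 1)).choose (m + 1) : ℝ)
        = ‖coeff n (∑ i, ∏ j, X i j)‖ := by
          rw [← hZ, coeff_mk, norm_mul, norm_pow, norm_neg, norm_one, one_pow, one_mul,
            Complex.norm_natCast]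
      _ ≤ ∑ i, ‖coeff n (∏ j, X i j)‖ := by rw [map_sum]; exact norm_sum_le _ _
      _ ≤ ∑ i, (∏ j, M i j) * ((n : ℝ) + 1) ^ m :=
          sum_le_sum fun i _ => norm_coeff_prod_le (hM i) n
      _ = (∑ i, ∏ j, M i j) * ((n : ℝ) + 1) ^ m := (sum_mul ..).symm
end
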